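/- arXiv:2207.09257 — 2 statements merged into one kernel-verified Lean document; each statement's English description precedes it below -/
import Mathlib

section
/- Let X = {1,2,3,4,5} be the quandle with operation 1∗1=1∗2=1∗3=1, 1∗4=1∗5=2; 2∗1=2∗2=2∗3=2, 2∗4=2∗5=3; 3∗1=3∗2=3∗3=3, 3∗4=3∗5=1; 4∗1=4∗2=4∗3=5, 4∗4=4∗5=4; 5∗1=5∗2=5∗3=4, 5∗4=5∗5=5. Then the set of idempotents of the quandle ring ℤ/2ℤ[X] is exactly {e₁, e₂, e₃, e₄, e₅, e₁+e₂+e₃, e₁+e₄+e₅, e₂+e₄+e₅, e₃+e₄+e₅, e₁+e₂+e₃+e₄+e₅}. -/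
noncomputable def qmul {X : Type*} {k : Type*} [CommRing k] (op : X → X → X)
    (f g : X →₀ k) : X →₀ k :=
  f.sum fun x a => g.sum fun y b => Finsupp.single (op x y) (a * b)

def op5 : Fin 5 → Fin 5 → Fin 5 := fun x y =>
  if y.val ≤ 2 then ![0, 1, 2, 4, 3] x else ![1, 2, 0, 3, 4] x

noncomputable def e5 (x : Fin 5) : Fin 5 →₀ ZMod 2 := Finsupp.single x 1

lemma qmul_apply (f g : Fin 5 →₀ ZMod 2) (z : Fin 5) :
    qmul op5 f g z = ∑ x : Fin 5, ∑ y : Fin 5, if op5 x y = z then f x * g y else 0 := by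
  unfold qmul
  rw [Finsupp.sum_fintype]
  · rw [Finsupp.finset_sum_apply]
    refine Finset.sum_congr rfl fun x _ => ?_
    rw [Finsupp.sum_fintype]
    · rw [Finsupp.finset_sum_apply]
      refine Finset.sum_congr rfl fun y _ => ?_
      rw [Finsupp.single_apply]
    · intro y; simp
  · intro x; simp [Finsupp.sum_fintype]

set_option maxRecDepth 10000 in
lemma key : ∀ f : Fin 5 → ZMod 2,
    (f ≠ 0 ∧ (fun z => ∑ x : Fin 5, ∑ y : Fin 5, if op5 x y = z then f x * f y else 0) = f) ↔
      (f = Pi.single 0 1 ∨ f = Pi.single 1 1 ∨ f = Pi.single 2 1 ∨ f = Pi.single 3 1 ∨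
       f = Pi.single 4 1 ∨
       f = Pi.single 0 1 + Pi.single 1 1 + Pi.single 2 1 ∨
       f = Pi.single 0 1 + Pi.single 3 1 + Pi.single 4 1 ∨
       f = Pi.single 1 1 + Pi.single 3 1 + Pi.single 4 1 ∨
       f = Pi.single 2 1 + Pi.single 3 1 + Pi.single 4 1 ∨
       f = Pi.single 0 1 + Pi.single 1 1 + Pi.single 2 1 + Pi.single 3 1 + Pi.single 4 1) := by
  decide

/-- The idempotents of `ℤ/2ℤ[X]` for the order 5 quandle above are exactly
`e₁, …, e₅, e₁+e₂+e₃, e₁+e₄+e₅, e₂+e₄+e₅, e₃+e₄+e₅, e₁+e₂+e₃+e₄+e₅`. -/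
theorem idempotents_mod_two_order_five_quandle :
    {u : Fin 5 →₀ ZMod 2 | u ≠ 0 ∧ qmul op5 u u = u} =
      {e5 0, e5 1, e5 2, e5 3, e5 4,
       e5 0 + e5 1 + e5 2, e5 0 + e5 3 + e5 4, e5 1 + e5 3 + e5 4,
       e5 2 + e5 3 + e5 4, e5 0 + e5 1 + e5 2 + e5 3 + e5 4} := by
  ext u
  have hq : ⇑(qmul op5 u u) =
      fun z => ∑ x : Fin 5, ∑ y : Fin 5, if op5 x y = z then u x * u y else 0 :=
    funext (qmul_apply u u)
  simp only [Set.mem_setOf_eq, Set.mem_insert_iff, Set.mem_singleton_iff, ne_eq,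
    ← DFunLike.coe_fn_eq, hq, e5, Finsupp.coe_add, Finsupp.single_eq_pi_single,
    Finsupp.coe_zero]
  exact key ⇑u
end

section
/- Let X be a medial quandle and k a commutative ring. If u and v are elements of the quandle ring k[X] with u·u = u and v·v = v, then (u·v)·(u·v) = u·v; in particular, the set of idempotents of k[X] together with 0 is closed under the ring multiplication. -/
section QuandleRing

variable {X k : Type*} [CommRing k] (op : X → X → X)

theorem qmul_zero_left (g : X →₀ k) : qmul op 0 g = 0 :=
  Finsupp.sum_zero_index

theorem qmul_zero_right (f : X →₀ k) : qmul op f 0 = 0 := by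
  simp [qmul]

theorem qmul_add_left (f f' g : X →₀ k) :
    qmul op (f + f') g = qmul op f g + qmul op f' g := by
  classical
  refine Finsupp.sum_add_index (fun _ _ => by simp) fun _ _ a a' => ?_
  simp only [add_mul, Finsupp.single_add, Finsupp.sum_add]

theorem qmul_add_right (f g g' : X →₀ k) :
    qmul op f (g + g') = qmul op f g + qmul op f g' := by
  classical
  rw [qmul, qmul, qmul, ← Finsupp.sum_add]
  refine Finsupp.sum_congr fun x _ => ?_
  refine Finsupp.sum_add_index (fun _ _ => by simp) fun _ _ b b' => ?_
  simp only [mul_add, Finsupp.single_add]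

theorem qmul_single_single (x y : X) (a b : k) :
    qmul op (Finsupp.single x a) (Finsupp.single y b) = Finsupp.single (op x y) (a * b) := by
  simp [qmul]

theorem qmul_qmul_qmul_comm
    (hmedial : ∀ x y z w, op (op x y) (op z w) = op (op x z) (op y w))
    (a b c d : X →₀ k) :
    qmul op (qmul op a b) (qmul op c d) = qmul op (qmul op a c) (qmul op b d) := by
  induction a using Finsupp.induction_linear with
  | zero => simp only [qmul_zero_left]
  | add a₁ a₂ h₁ h₂ => simp only [qmul_add_left, h₁, h₂]
  | single x r =>
  induction b using Finsupp.induction_linear with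
  | zero => simp only [qmul_zero_left, qmul_zero_right]
  | add b₁ b₂ h₁ h₂ => simp only [qmul_add_left, qmul_add_right, h₁, h₂]
  | single y s =>
  induction c using Finsupp.induction_linear with
  | zero => simp only [qmul_zero_left, qmul_zero_right]
  | add c₁ c₂ h₁ h₂ => simp only [qmul_add_left, qmul_add_right, h₁, h₂]
  | single z t =>
  induction d using Finsupp.induction_linear with
  | zero => simp only [qmul_zero_right]
  | add d₁ d₂ h₁ h₂ => simp only [qmul_add_right, h₁, h₂]
  | single w u => simp only [qmul_single_single, hmedial, mul_mul_mul_comm]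

theorem qmul_self_qmul_of_medial
    (hmedial : ∀ x y z w, op (op x y) (op z w) = op (op x z) (op y w))
    {u v : X →₀ k} (hu : qmul op u u = u) (hv : qmul op v v = v) :
    qmul op (qmul op u v) (qmul op u v) = qmul op u v := by
  rw [qmul_qmul_qmul_comm op hmedial, hu, hv]

theorem mem_idempotents_union_zero_iff (u : X →₀ k) :
    u ∈ {u : X →₀ k | u ≠ 0 ∧ qmul op u u = u} ∪ {0} ↔ qmul op u u = u := by
  rcases eq_or_ne u 0 with rfl | hu
  · simp [qmul_zero_left]
  · simp [hu]

end QuandleRing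

theorem product_of_idempotents_is_idempotent_of_medial_general {X : Type*} {k : Type*} [CommRing k]
    (op : X → X → X)
    (hmedial : ∀ x y z w, op (op x y) (op z w) = op (op x z) (op y w)) :
    (∀ u v : X →₀ k, qmul op u u = u → qmul op v v = v →
      qmul op (qmul op u v) (qmul op u v) = qmul op u v) ∧
    (∀ u v : X →₀ k,
      u ∈ {u : X →₀ k | u ≠ 0 ∧ qmul op u u = u} ∪ {0} →
      v ∈ {u : X →₀ k | u ≠ 0 ∧ qmul op u u = u} ∪ {0} →
      qmul op u v ∈ {u : X →₀ k | u ≠ 0 ∧ qmul op u u = u} ∪ {0}) := by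
  refine ⟨fun u v hu hv => qmul_self_qmul_of_medial op hmedial hu hv, fun u v hu hv => ?_⟩
  simp only [mem_idempotents_union_zero_iff] at hu hv ⊢
  exact qmul_self_qmul_of_medial op hmedial hu hv

/-- In the quandle ring of a medial quandle, a product of two elements
satisfying `u·u = u` and `v·v = v` again satisfies this identity; in
particular the set of idempotents together with `0` is closed under the ring
multiplication. -/
theorem product_of_idempotents_is_idempotent_of_medial {X : Type*} {k : Type*} [CommRing k]
    (op : X → X → X)
    (hidem : ∀ x, op x x = x)
    (hbij : ∀ y, Function.Bijective (fun x => op x y))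
    (hdist : ∀ x y z, op (op x y) z = op (op x z) (op y z))
    (hmedial : ∀ x y z w, op (op x y) (op z w) = op (op x z) (op y w)) :
    (∀ u v : X →₀ k, qmul op u u = u → qmul op v v = v →
      qmul op (qmul op u v) (qmul op u v) = qmul op u v) ∧
    (∀ u v : X →₀ k,
      u ∈ {u : X →₀ k | u ≠ 0 ∧ qmul op u u = u} ∪ {0} →
      v ∈ {u : X →₀ k | u ≠ 0 ∧ qmul op u u = u} ∪ {0} →
      qmul op u v ∈ {u : X →₀ k | u ≠ 0 ∧ qmul op u u = u} ∪ {0}) :=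
  product_of_idempotents_is_idempotent_of_medial_general op hmedial
end
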